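/- Let $(\varepsilon_i)_{i \in [n]}$ be independent Rademacher random variables (each uniform on $\{-1, 1\}$) and let $(a_i)_{i \in [n]}$ be real numbers. Then for all $p \ge 2$, $(E[|\sum_{i \in [n]} a_i \varepsilon_i|^p])^{1/p} \le \sqrt{p} \cdot \sqrt{e \sum_{i \in [n]} a_i^2}$. -/

import Mathlib

open MeasureTheory ProbabilityTheory ENNReal

/-!
Each `a i * X i` has moment generating function `cosh (a_i t) ≤ exp (a_i² t² / 2)`, so by
independence the sum `S` is sub-Gaussian with variance proxy `σ² = ∑ a_i²`. Integrating the
pointwise bound `|x|^p ≤ (p / (e t))^p (e^{tx} + e^{-tx})`, a rescaling of `u ≤ e^{u-1}`, and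
choosing `t = √(p / σ²)` gives `E|S|^p ≤ 2 (p σ² / e)^{p/2}`; for `p ≥ 1` the factor `2^{1/p} ≤ e`
is absorbed into the constant.
-/

open Real
open scoped NNReal

noncomputable def rademacherMeasure : Measure ℝ :=
  (1 / 2 : ℝ≥0∞) • Measure.dirac (1 : ℝ) + (1 / 2 : ℝ≥0∞) • Measure.dirac (-1 : ℝ)

lemma integrable_rademacherMeasure (f : ℝ → ℝ) : Integrable f rademacherMeasure :=
  ((integrable_dirac (by simp)).smul_measure (by simp)).add_measure
    ((integrable_dirac (by simp)).smul_measure (by simp))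

lemma integral_rademacherMeasure (f : ℝ → ℝ) :
    ∫ x, f x ∂rademacherMeasure = (f 1 + f (-1)) / 2 := by
  rw [rademacherMeasure, integral_add_measure ((integrable_dirac (by simp)).smul_measure (by simp))
    ((integrable_dirac (by simp)).smul_measure (by simp)), integral_smul_measure,
    integral_smul_measure, integral_dirac, integral_dirac]
  simp only [one_div, toReal_inv, toReal_ofNat, smul_eq_mul]
  ring

lemma hasSubgaussianMGF_const_mul_rademacherMeasure (a : ℝ) :
    HasSubgaussianMGF (fun x ↦ a * x) (‖a‖₊ ^ 2) rademacherMeasure where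
  integrable_exp_mul _ := integrable_rademacherMeasure _
  mgf_le t := calc
    mgf (fun x ↦ a * x) rademacherMeasure t = cosh (t * a) := by
      rw [mgf, integral_rademacherMeasure, cosh_eq]
      ring_nf
    _ ≤ exp ((t * a) ^ 2 / 2) := cosh_le_exp_half_sq _
    _ = exp ((‖a‖₊ ^ 2 : ℝ≥0) * t ^ 2 / 2) := by
      push_cast
      rw [norm_eq_abs, sq_abs]
      ring_nf

lemma hasSubgaussianMGF_const_mul_of_map_eq_rademacherMeasure {Ω : Type*} [MeasurableSpace Ω]
    {μ : Measure Ω} {X : Ω → ℝ} (hX : AEMeasurable X μ) (h : μ.map X = rademacherMeasure)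
    (a : ℝ) : HasSubgaussianMGF (fun ω ↦ a * X ω) (‖a‖₊ ^ 2) μ :=
  (h ▸ hasSubgaussianMGF_const_mul_rademacherMeasure a).of_map hX

lemma rpow_le_mul_exp_mul {y p t : ℝ} (hy : 0 ≤ y) (hp : 0 < p) (ht : 0 < t) :
    y ^ p ≤ (p / (exp 1 * t)) ^ p * exp (t * y) := by
  have hlin : y ≤ p / (exp 1 * t) * exp (t * y / p) := by
    have hu : t * y / p ≤ exp (t * y / p) / exp 1 := by
      rw [← exp_sub]
      linarith [add_one_le_exp (t * y / p - 1)]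
    calc y = p / t * (t * y / p) := by field_simp
      _ ≤ p / t * (exp (t * y / p) / exp 1) := by gcongr
      _ = p / (exp 1 * t) * exp (t * y / p) := by ring
  calc y ^ p ≤ (p / (exp 1 * t) * exp (t * y / p)) ^ p := rpow_le_rpow hy hlin hp.le
    _ = (p / (exp 1 * t)) ^ p * exp (t * y) := by
      rw [mul_rpow (by positivity) (exp_pos _).le, ← exp_mul, div_mul_cancel₀ _ hp.ne']

lemma exp_mul_abs_le_exp_add_exp (t x : ℝ) : exp (t * |x|) ≤ exp (t * x) + exp (-t * x) := by
  rcases abs_cases x with ⟨h, -⟩ | ⟨h, -⟩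
  · rw [h]; linarith [exp_pos (-t * x)]
  · rw [h, neg_mul_comm]; linarith [exp_pos (t * x)]

namespace ProbabilityTheory.HasSubgaussianMGF

variable {Ω : Type*} [MeasurableSpace Ω] {μ : Measure Ω} {X : Ω → ℝ} {c : ℝ≥0} {p : ℝ}

lemma integral_abs_rpow_le_of_pos (h : HasSubgaussianMGF X c μ) (hp : 0 < p) {t : ℝ}
    (ht : 0 < t) :
    ∫ ω, |X ω| ^ p ∂μ ≤ (p / (exp 1 * t)) ^ p * (2 * exp (c * t ^ 2 / 2)) := by
  have hC : 0 ≤ (p / (exp 1 * t)) ^ p := by positivity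
  calc ∫ ω, |X ω| ^ p ∂μ
      ≤ ∫ ω, (p / (exp 1 * t)) ^ p * (exp (t * X ω) + exp (-t * X ω)) ∂μ := by
        refine integral_mono_of_nonneg (ae_of_all _ fun _ ↦ by positivity)
          (((h.integrable_exp_mul t).add (h.integrable_exp_mul (-t))).const_mul _)
          (ae_of_all _ fun ω ↦ ?_)
        exact (rpow_le_mul_exp_mul (abs_nonneg _) hp ht).trans
          (mul_le_mul_of_nonneg_left (exp_mul_abs_le_exp_add_exp t (X ω)) hC)
    _ = (p / (exp 1 * t)) ^ p * (mgf X μ t + mgf X μ (-t)) := by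
        rw [integral_const_mul, integral_add (h.integrable_exp_mul t) (h.integrable_exp_mul (-t)),
          mgf, mgf]
    _ ≤ (p / (exp 1 * t)) ^ p * (exp (c * t ^ 2 / 2) + exp (c * (-t) ^ 2 / 2)) := by
        gcongr <;> exact h.mgf_le _
    _ = (p / (exp 1 * t)) ^ p * (2 * exp (c * t ^ 2 / 2)) := by
        rw [neg_sq]
        ring

lemma integral_abs_rpow_le (h : HasSubgaussianMGF X c μ) (hp : 0 < p) :
    ∫ ω, |X ω| ^ p ∂μ ≤ 2 * (p * c / exp 1) ^ (p / 2) := by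
  rcases eq_zero_or_pos c with rfl | hc
  · have hzero : (fun ω ↦ |X ω| ^ p) =ᵐ[μ] 0 := by
      filter_upwards [h.ae_eq_zero_of_hasSubgaussianMGF_zero] with ω hω
      simp [hω, zero_rpow hp.ne']
    simp [integral_congr_ae hzero, zero_rpow (by positivity : p / 2 ≠ 0)]
  set t := sqrt (p / c)
  have ht : 0 < t := by positivity
  have ht2 : t ^ 2 = p / c := sq_sqrt (by positivity)
  have hbase : (p / (exp 1 * t)) ^ (2 : ℝ) * exp 1 = p * c / exp 1 := by
    rw [Real.rpow_two, div_pow, mul_pow, ht2]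
    field_simp
  have hexp : exp (c * t ^ 2 / 2) = exp 1 ^ (p / 2) := by
    rw [exp_one_rpow, ht2]
    field_simp
  calc ∫ ω, |X ω| ^ p ∂μ ≤ (p / (exp 1 * t)) ^ p * (2 * exp (c * t ^ 2 / 2)) :=
        h.integral_abs_rpow_le_of_pos hp ht
    _ = 2 * (((p / (exp 1 * t)) ^ (2 : ℝ)) ^ (p / 2) * exp 1 ^ (p / 2)) := by
        rw [hexp, ← rpow_mul (by positivity), mul_div_cancel₀ p two_ne_zero]
        ring
    _ = 2 * (p * c / exp 1) ^ (p / 2) := by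
        rw [← mul_rpow (by positivity) (by positivity), hbase]

lemma integral_abs_rpow_rpow_one_div_le (h : HasSubgaussianMGF X c μ) (hp : 1 ≤ p) :
    (∫ ω, |X ω| ^ p ∂μ) ^ (1 / p) ≤ sqrt p * sqrt (exp 1 * c) := by
  have hp0 : 0 < p := by linarith
  have htwo : (2 : ℝ) ^ (1 / p) ≤ exp 1 := calc
    (2 : ℝ) ^ (1 / p) ≤ 2 ^ (1 : ℝ) :=
      rpow_le_rpow_of_exponent_le one_le_two ((div_le_one hp0).mpr hp)
    _ ≤ exp 1 := by linarith [rpow_one (2 : ℝ), add_one_le_exp 1]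
  calc (∫ ω, |X ω| ^ p ∂μ) ^ (1 / p) ≤ (2 * (p * c / exp 1) ^ (p / 2)) ^ (1 / p) :=
        rpow_le_rpow (integral_nonneg fun _ ↦ by positivity) (h.integral_abs_rpow_le hp0)
          (by positivity)
    _ = 2 ^ (1 / p) * sqrt (p * c / exp 1) := by
        rw [mul_rpow zero_le_two (by positivity), ← rpow_mul (by positivity), sqrt_eq_rpow]
        congr 2
        field_simp
    _ ≤ exp 1 * sqrt (p * c / exp 1) := by gcongr
    _ = sqrt p * sqrt (exp 1 * c) := by
        have hsplit : p * (exp 1 * c) = exp 1 ^ 2 * (p * c / exp 1) := by field_simp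
        rw [← sqrt_mul hp0.le, hsplit, sqrt_mul (by positivity), sqrt_sq (exp_pos 1).le]

end ProbabilityTheory.HasSubgaussianMGF

theorem khintchine_rademacher {Ω : Type*} [MeasurableSpace Ω]
    (μ : Measure Ω)
    (n : ℕ) (X : Fin n → Ω → ℝ) (hmeas : ∀ i, Measurable (X i))
    (hindep : iIndepFun X μ)
    (hdist : ∀ i, μ.map (X i) =
      (1 / 2 : ℝ≥0∞) • Measure.dirac (1 : ℝ) + (1 / 2 : ℝ≥0∞) • Measure.dirac (-1 : ℝ))
    (a : Fin n → ℝ) (p : ℝ) (hp : 2 ≤ p) :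
    (∫ ω, |∑ i, a i * X i ω| ^ p ∂μ) ^ (1 / p) ≤
      Real.sqrt p * Real.sqrt (Real.exp 1 * ∑ i, a i ^ 2) := by
  have hsum : HasSubgaussianMGF (fun ω ↦ ∑ i, a i * X i ω) (∑ i, ‖a i‖₊ ^ 2) μ :=
    HasSubgaussianMGF.sum_of_iIndepFun (hindep.comp _ fun i ↦ measurable_const_mul (a i))
      fun i _ ↦ hasSubgaussianMGF_const_mul_of_map_eq_rademacherMeasure
        (hmeas i).aemeasurable (hdist i) (a i)
  have hc : ((∑ i, ‖a i‖₊ ^ 2 : ℝ≥0) : ℝ) = ∑ i, a i ^ 2 := by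
    push_cast
    simp only [norm_eq_abs, sq_abs]
  simpa only [hc] using hsum.integral_abs_rpow_rpow_one_div_le (by linarith)
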